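/- Let n ∈ ℕ. (1) If S is a pseudo-symmetric numerical semigroup and A ⊆ {x ∈ S : F(S)/2 < x < F(S)} is a set of cardinality n such that S∖A is a numerical semigroup, then l(S∖A) = 2n + 1. (2) Conversely, for every numerical semigroup T with l(T) = 2n + 1 there exist a pseudo-symmetric numerical semigroup S with F(S) = F(T) and a set A ⊆ {x ∈ S : F(S)/2 < x < F(S)} of cardinality n such that T = S∖A. -/

import Mathlib

def IsNumericalSemigroup (S : Set ℕ) : Prop :=
  0 ∈ S ∧ (∀ a ∈ S, ∀ b ∈ S, a + b ∈ S) ∧ Sᶜ.Finite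

noncomputable def frobNS (S : Set ℕ) : ℤ :=
  sSup (insert (-1) ((fun n : ℕ => (n : ℤ)) '' Sᶜ))

def toZNS (S : Set ℕ) : Set ℤ := {z : ℤ | ∃ n ∈ S, (n : ℤ) = z}

noncomputable def genusNS (S : Set ℕ) : ℕ := Sᶜ.ncard

def smallNS (S : Set ℕ) : Set ℕ := {s ∈ S | (s : ℤ) < frobNS S}

noncomputable def nNS (S : Set ℕ) : ℕ := (smallNS S).ncard

def LgapsNS (S : Set ℕ) : Set ℕ :=
  {x : ℕ | x ∉ S ∧ frobNS S - (x : ℤ) ∉ toZNS (smallNS S)}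

noncomputable def lNS (S : Set ℕ) : ℕ := (LgapsNS S).ncard

noncomputable def hNS (S : Set ℕ) : ℕ := sSup (LgapsNS S)

def PFNS (S : Set ℕ) : Set ℤ :=
  {x : ℤ | x ∉ toZNS S ∧ ∀ s ∈ S, s ≠ 0 → x + (s : ℤ) ∈ toZNS S}

noncomputable def typeNS (S : Set ℕ) : ℕ := (PFNS S).ncard

def msgNS (S : Set ℕ) : Set ℕ :=
  {x : ℕ | x ∈ S ∧ x ≠ 0 ∧ ∀ a ∈ S, ∀ b ∈ S, a ≠ 0 → b ≠ 0 → a + b ≠ x}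

noncomputable def multNS (S : Set ℕ) : ℕ := sInf (S \ {0})

def IsIrreducibleNS (S : Set ℕ) : Prop :=
  IsNumericalSemigroup S ∧
    ¬ ∃ T₁ T₂ : Set ℕ, IsNumericalSemigroup T₁ ∧ IsNumericalSemigroup T₂ ∧
        S ⊂ T₁ ∧ S ⊂ T₂ ∧ S = T₁ ∩ T₂

def IsSymmetricNS (S : Set ℕ) : Prop := IsIrreducibleNS S ∧ Odd (frobNS S)

def IsPseudoSymmetricNS (S : Set ℕ) : Prop := IsIrreducibleNS S ∧ Even (frobNS S)

def genNS (A : Set ℕ) : Set ℕ := (AddSubmonoid.closure A : Set ℕ)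

def IsURSYNS (S : Set ℕ) : Prop :=
  ∃ T : Set ℕ, ∃ x : ℕ, IsSymmetricNS T ∧ x ∈ msgNS T ∧ S = T \ {x}

def IsURPSYNS (S : Set ℕ) : Prop :=
  ∃ T : Set ℕ, ∃ x : ℕ, IsPseudoSymmetricNS T ∧ x ∈ msgNS T ∧ S = T \ {x}

def deltaNS (S : Set ℕ) : Set ℕ := {s ∈ S | 2 * (s : ℤ) < frobNS S}

def thetaNS (S : Set ℕ) : Set ℕ :=
  genNS (deltaNS S) ∪ {n : ℕ | frobNS S < (n : ℤ)}

noncomputable def CNS (F : ℕ) : Set ℕ :=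
  if Odd F then (({0} : Set ℕ) ∪ {n : ℕ | (F + 1) / 2 ≤ n}) \ {F}
  else (({0} : Set ℕ) ∪ {n : ℕ | F / 2 + 1 ≤ n}) \ {F}

/-!
Let `f = F(S)`. A gap `x` is of the second kind exactly when `f - x` is a gap too, so
`x ↦ f - x` pairs the second-kind gaps above `f / 2` with those below it, and `l(S)` is twice
the number of those above `f / 2`, plus one if `f / 2` is a gap. A numerical semigroup is
irreducible iff `f - x ∈ S` for every gap `x ≠ f / 2`. Hence, for pseudo-symmetric `S`, the
second-kind gaps of `S \ A` are `A`, `f - A` and `f / 2`. Conversely, adjoining to `T` its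
second-kind gaps above `f / 2` gives a numerical semigroup with Frobenius number `f` that
satisfies this criterion, and oddness of `l(T)` makes `f / 2` a gap, so `f` is even.
-/

section

variable {S T A : Set ℕ} {f m x : ℕ}

theorem frobNS_eq_of_isGreatest (hf : IsGreatest Sᶜ f) : frobNS S = f := by
  have hcast : IsGreatest ((fun n : ℕ => (n : ℤ)) '' Sᶜ) f := Nat.mono_cast.map_isGreatest hf
  exact (hcast.insert (-1)).csSup_eq.trans (max_eq_right (by omega))

theorem exists_isGreatest_compl (hS : Sᶜ.Finite) (hne : Sᶜ.Nonempty) : ∃ f, IsGreatest Sᶜ f :=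
  hS.bddAbove.exists_isGreatest_of_nonempty hne

theorem compl_nonempty_of_even_frobNS (h : Even (frobNS S)) : Sᶜ.Nonempty := by
  by_contra hne
  rw [Set.not_nonempty_iff_eq_empty] at hne
  simp [frobNS, hne] at h

theorem mem_of_frob_lt (hf : IsGreatest Sᶜ f) {y : ℕ} (hy : f < y) : y ∈ S :=
  not_not.1 fun h => (hf.2 h).not_gt hy

theorem setOf_frobNS_lt_two_mul_eq (hf : IsGreatest Sᶜ f) :
    {x ∈ S | frobNS S < 2 * (x : ℤ) ∧ (x : ℤ) < frobNS S} = {x ∈ S | f < 2 * x ∧ x < f} := by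
  ext x
  simp only [frobNS_eq_of_isGreatest hf, Set.mem_ofPred_eq]
  norm_cast

theorem mem_LgapsNS_iff (hf : IsGreatest Sᶜ f) : x ∈ LgapsNS S ↔ x ∉ S ∧ f - x ∉ S := by
  simp only [LgapsNS, smallNS, toZNS, Set.mem_ofPred_eq, frobNS_eq_of_isGreatest hf]
  refine and_congr_right fun hx => not_congr ⟨?_, fun hfx => ⟨f - x, ⟨hfx, ?_⟩, ?_⟩⟩
  · rintro ⟨y, ⟨hy, -⟩, hyx⟩
    rwa [show f - x = y by omega]
  · have := hf.2 hx
    have : f - x ≠ f := fun h => hf.1 (by rwa [h] at hfx)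
    omega
  · have := hf.2 hx
    omega

theorem IsNumericalSemigroup.sub_notMem (hS : IsNumericalSemigroup S) (hfS : f ∉ S) (hx : x ∈ S)
    (hxf : x ≤ f) : f - x ∉ S := fun hfx => hfS (by simpa [hxf] using hS.2.1 x hx _ hfx)

theorem IsNumericalSemigroup.insert_of_add_mem (hS : IsNumericalSemigroup S) (hxx : x + x ∈ S)
    (hadd : ∀ s ∈ S, s ≠ 0 → x + s ∈ S) : IsNumericalSemigroup (insert x S) := by
  have hadd' : ∀ s ∈ S, x + s ∈ insert x S := fun s hs => by
    rcases eq_or_ne s 0 with rfl | hs0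
    · exact Set.mem_insert x S
    · exact Or.inr (hadd s hs hs0)
  refine ⟨Or.inr hS.1, ?_, hS.2.2.subset (Set.compl_subset_compl.2 (Set.subset_insert x S))⟩
  rintro a (rfl | ha) b (rfl | hb)
  · exact Or.inr hxx
  · exact hadd' b hb
  · rw [add_comm]
    exact hadd' a ha
  · exact Or.inr (hS.2.1 a ha b hb)

theorem IsNumericalSemigroup.insert_frob (hS : IsNumericalSemigroup S) (hf : IsGreatest Sᶜ f) :
    IsNumericalSemigroup (insert f S) := by
  have hf0 : f ≠ 0 := fun h => hf.1 (h ▸ hS.1)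
  exact hS.insert_of_add_mem (mem_of_frob_lt hf (by omega)) fun s _ hs => mem_of_frob_lt hf (by omega)

theorem IsIrreducibleNS.eq_of_insert {a b : ℕ} (hS : IsIrreducibleNS S) (ha : a ∉ S) (hb : b ∉ S)
    (hSa : IsNumericalSemigroup (insert a S)) (hSb : IsNumericalSemigroup (insert b S)) :
    a = b := by
  by_contra hab
  refine hS.2 ⟨_, _, hSa, hSb, Set.ssubset_insert ha, Set.ssubset_insert hb, ?_⟩
  ext x
  simp only [Set.mem_inter_iff, Set.mem_insert_iff]
  grind

theorem IsIrreducibleNS.sub_mem (hS : IsIrreducibleNS S) (hf : IsGreatest Sᶜ f) (hx : x ∉ S)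
    (hx2 : 2 * x ≠ f) : f - x ∈ S := by
  -- The largest gap `h` with `f - h` also a gap and `2 * h ≠ f` can be adjoined to `S`, as can `f`;
  -- irreducibility then forces `h = f`, which is absurd since `f - f = 0 ∈ S`.
  by_contra hfx
  set G := {y | y ∉ S ∧ 2 * y ≠ f ∧ f - y ∉ S}
  obtain ⟨h, ⟨hhS, hh2, hfh⟩, hmax⟩ :=
    Set.exists_max_image G id (hS.1.2.2.subset fun y hy => hy.1) ⟨x, hx, hx2, hfx⟩
  have hhf := hf.2 hhS
  have hfh_le : f - h ≤ h := hmax (f - h) ⟨hfh, by omega, by rwa [Nat.sub_sub_self hhf]⟩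
  have hSh : IsNumericalSemigroup (insert h S) := by
    refine hS.1.insert_of_add_mem (mem_of_frob_lt hf (by omega)) fun s hs hs0 => ?_
    by_contra hhs
    have hhsf := hf.2 hhs
    have hfhs : f - (h + s) ∉ S := fun h' =>
      hfh (by simpa [show f - (h + s) + s = f - h by omega] using hS.1.2.1 _ h' s hs)
    have := hmax (h + s) ⟨hhs, by omega, hfhs⟩
    simp only [id] at this
    omega
  have := hS.eq_of_insert hhS hf.1 hSh (IsNumericalSemigroup.insert_frob hS.1 hf)
  exact hfh (by simpa [this] using hS.1.1)

theorem frob_mem_of_ssubset (hf : IsGreatest Sᶜ f) (hsym : ∀ x ∉ S, 2 * x ≠ f → f - x ∈ S)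
    (hT : IsNumericalSemigroup T) (hST : S ⊂ T) : f ∈ T := by
  obtain ⟨x, hxT, hxS⟩ := Set.exists_of_ssubset hST
  by_cases h2 : 2 * x = f
  · simpa [← h2, two_mul] using hT.2.1 x hxT x hxT
  · simpa [Nat.add_sub_cancel' (hf.2 hxS)] using hT.2.1 x hxT _ (hST.1 (hsym x hxS h2))

theorem isIrreducibleNS_iff (hS : IsNumericalSemigroup S) (hf : IsGreatest Sᶜ f) :
    IsIrreducibleNS S ↔ ∀ x ∉ S, 2 * x ≠ f → f - x ∈ S := by
  refine ⟨fun h x => h.sub_mem hf, fun hsym => ⟨hS, ?_⟩⟩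
  rintro ⟨T₁, T₂, h₁, h₂, hS₁, hS₂, rfl⟩
  exact hf.1 ⟨frob_mem_of_ssubset hf hsym h₁ hS₁, frob_mem_of_ssubset hf hsym h₂ hS₂⟩

-- For `f = F(S)`, the gaps of the second kind lying above `F(S) / 2` (see `mem_LgapsNS_iff`).
def upperLgaps (S : Set ℕ) (f : ℕ) : Set ℕ := {x | x ∉ S ∧ f - x ∉ S ∧ f < 2 * x}

theorem lNS_eq (hf : IsGreatest Sᶜ f) :
    lNS S = 2 * (upperLgaps S f).ncard + {x | x ∉ S ∧ 2 * x = f}.ncard := by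
  set U := upperLgaps S f
  have hfin : ∀ B ⊆ Sᶜ, B.Finite := fun B hB => (Set.finite_Iic f).subset fun x hx => hf.2 (hB hx)
  have hUfin : U.Finite := hfin U fun x hx => hx.1
  have hdecomp : LgapsNS S = (U ∪ (f - ·) '' U) ∪ {x | x ∉ S ∧ 2 * x = f} := by
    ext x
    rw [mem_LgapsNS_iff hf]
    constructor
    · rintro ⟨hx, hfx⟩
      have hxf := hf.2 hx
      rcases lt_trichotomy f (2 * x) with h | h | h
      · exact Or.inl (Or.inl ⟨hx, hfx, h⟩)
      · exact Or.inr ⟨hx, h.symm⟩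
      · refine Or.inl (Or.inr ⟨f - x, ⟨hfx, ?_, by omega⟩, Nat.sub_sub_self hxf⟩)
        rwa [Nat.sub_sub_self hxf]
    · rintro ((⟨hx, hfx, -⟩ | ⟨y, ⟨hy, hfy, -⟩, rfl⟩) | ⟨hx, h2⟩)
      · exact ⟨hx, hfx⟩
      · exact ⟨hfy, by rwa [Nat.sub_sub_self (hf.2 hy)]⟩
      · exact ⟨hx, by rwa [show f - x = x by omega]⟩
  have hinj : Set.InjOn (f - ·) U := fun a ha b hb hab => by
    have := hf.2 ha.1
    have := hf.2 hb.1
    simp only at hab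
    omega
  have hdisj : Disjoint U ((f - ·) '' U) := by
    rw [Set.disjoint_left]
    rintro a ⟨-, -, ha⟩ ⟨b, ⟨hb, -, hb2⟩, rfl⟩
    beta_reduce at ha
    have := hf.2 hb
    omega
  have hdisj' : Disjoint (U ∪ (f - ·) '' U) {x | x ∉ S ∧ 2 * x = f} := by
    rw [Set.disjoint_right]
    rintro x ⟨-, hx⟩ (⟨-, -, h⟩ | ⟨b, ⟨hb, -, hb2⟩, rfl⟩)
    · omega
    · beta_reduce at hx
      have := hf.2 hb
      omega
  rw [lNS, hdecomp, Set.ncard_union_eq hdisj' (hUfin.union (hUfin.image _))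
    (hfin _ fun x hx => hx.1), Set.ncard_union_eq hdisj hUfin (hUfin.image _), hinj.ncard_image,
    two_mul]


theorem isGreatest_compl_sdiff (hf : IsGreatest Sᶜ f) (hA : ∀ x ∈ A, x ≤ f) :
    IsGreatest (S \ A)ᶜ f := by
  refine ⟨fun h => hf.1 h.1, fun x hx => ?_⟩
  by_cases hxS : x ∈ S
  · exact hA x (by simpa [hxS] using hx)
  · exact hf.2 hxS

theorem upperLgaps_sdiff (hS : IsIrreducibleNS S) (hf : IsGreatest Sᶜ f)
    (hA : A ⊆ {x ∈ S | f < 2 * x ∧ x < f}) : upperLgaps (S \ A) f = A := by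
  ext x
  constructor
  · rintro ⟨hx, hfx, h2⟩
    by_contra hxA
    have hxS : x ∉ S := fun h => hx ⟨h, hxA⟩
    have hfxA : f - x ∈ A := by
      by_contra h
      exact hfx ⟨hS.sub_mem hf hxS (by omega), h⟩
    have := (hA hfxA).2.1
    have := hf.2 hxS
    omega
  · intro hxA
    obtain ⟨hxS, h2, hxf⟩ := hA hxA
    exact ⟨fun h => h.2 hxA, fun h => IsNumericalSemigroup.sub_notMem hS.1 hf.1 hxS hxf.le h.1, h2⟩

theorem setOf_notMem_sdiff_two_mul_eq (hS : IsNumericalSemigroup S) (hfS : f ∉ S)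
    (hm : 2 * m = f) : {x | x ∉ S \ A ∧ 2 * x = f} = {m} := by
  ext x
  simp only [Set.mem_singleton_iff, Set.mem_ofPred_eq]
  constructor
  · rintro ⟨-, h⟩
    omega
  · rintro rfl
    exact ⟨fun h => hfS (by simpa [← hm, two_mul] using hS.2.1 x h.1 x h.1), hm⟩

theorem IsPseudoSymmetricNS.lNS_sdiff (hS : IsPseudoSymmetricNS S)
    (hA : A ⊆ {x ∈ S | frobNS S < 2 * (x : ℤ) ∧ (x : ℤ) < frobNS S}) :
    lNS (S \ A) = 2 * A.ncard + 1 := by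
  obtain ⟨f, hf⟩ := exists_isGreatest_compl hS.1.1.2.2 (compl_nonempty_of_even_frobNS hS.2)
  obtain ⟨m, hm⟩ : Even f := by exact_mod_cast frobNS_eq_of_isGreatest hf ▸ hS.2
  rw [setOf_frobNS_lt_two_mul_eq hf] at hA
  rw [lNS_eq (isGreatest_compl_sdiff hf fun x hx => (hA hx).2.2.le), upperLgaps_sdiff hS.1 hf hA,
    setOf_notMem_sdiff_two_mul_eq hS.1.1 hf.1 (by omega : 2 * m = f), Set.ncard_singleton]

theorem isNumericalSemigroup_union_upperLgaps (hT : IsNumericalSemigroup T)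
    (hf : IsGreatest Tᶜ f) : IsNumericalSemigroup (T ∪ upperLgaps T f) := by
  have hadd : ∀ a ∈ upperLgaps T f, ∀ t ∈ T, a + t ∈ T ∪ upperLgaps T f := by
    rintro a ⟨-, hfa, ha2⟩ t ht
    by_contra h
    rw [Set.mem_union, not_or] at h
    have hle := hf.2 h.1
    refine h.2 ⟨h.1, fun h' => hfa ?_, by omega⟩
    simpa [show f - (a + t) + t = f - a by omega] using hT.2.1 _ h' t ht
  refine ⟨Or.inl hT.1, ?_, hT.2.2.subset (Set.compl_subset_compl.2 Set.subset_union_left)⟩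
  rintro a (ha | ha) b (hb | hb)
  · exact Or.inl (hT.2.1 a ha b hb)
  · rw [add_comm]
    exact hadd b hb a ha
  · exact hadd a ha b hb
  · have := ha.2.2
    have := hb.2.2
    exact Or.inl (mem_of_frob_lt hf (by omega))

theorem isGreatest_compl_union_upperLgaps (h0 : 0 ∈ T) (hf : IsGreatest Tᶜ f) :
    IsGreatest (T ∪ upperLgaps T f)ᶜ f :=
  ⟨fun h => h.elim hf.1 fun h => h.2.1 (by simpa using h0), fun _ hx => hf.2 fun h => hx (Or.inl h)⟩

theorem sub_mem_union_upperLgaps (hf : IsGreatest Tᶜ f) :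
    ∀ x ∉ T ∪ upperLgaps T f, 2 * x ≠ f → f - x ∈ T ∪ upperLgaps T f := by
  intro x hx hx2
  rw [Set.mem_union, not_or] at hx
  by_contra hfx
  rw [Set.mem_union, not_or] at hfx
  have hxf := hf.2 hx.1
  have : ¬ f < 2 * x := fun h => hx.2 ⟨hx.1, hfx.1, h⟩
  exact hfx.2 ⟨hfx.1, by rw [Nat.sub_sub_self hxf]; exact hx.1, by omega⟩

theorem exists_isPseudoSymmetricNS_sdiff_of_odd (hT : IsNumericalSemigroup T) (hl : Odd (lNS T)) :
    ∃ S A : Set ℕ, IsPseudoSymmetricNS S ∧ frobNS S = frobNS T ∧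
      A ⊆ {x ∈ S | frobNS S < 2 * (x : ℤ) ∧ (x : ℤ) < frobNS S} ∧
      lNS T = 2 * A.ncard + 1 ∧ T = S \ A := by
  obtain ⟨x, hx⟩ : (LgapsNS T).Nonempty := Set.nonempty_of_ncard_ne_zero hl.pos.ne'
  obtain ⟨f, hf⟩ := exists_isGreatest_compl hT.2.2 ⟨x, hx.1⟩
  have hmid : {x | x ∉ T ∧ 2 * x = f}.ncard ≤ 1 :=
    (Set.ncard_le_one (hT.2.2.subset fun x hx => hx.1)).2 fun a ⟨_, ha⟩ b ⟨_, hb⟩ => by omega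
  obtain ⟨m, hm⟩ : ∃ m, {x | x ∉ T ∧ 2 * x = f} = {m} := by
    rw [← Set.ncard_eq_one]
    rw [lNS_eq hf] at hl
    obtain ⟨k, hk⟩ := hl
    omega
  have hmT : m ∉ T ∧ 2 * m = f := (Set.ext_iff.1 hm m).2 rfl
  set U := upperLgaps T f
  have hfS := isGreatest_compl_union_upperLgaps hT.1 hf
  refine ⟨T ∪ U, U, ⟨(isIrreducibleNS_iff (isNumericalSemigroup_union_upperLgaps hT hf) hfS).2
    (sub_mem_union_upperLgaps hf), ?_⟩, ?_, ?_, ?_, ?_⟩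
  · rw [frobNS_eq_of_isGreatest hfS]
    exact ⟨m, by omega⟩
  · rw [frobNS_eq_of_isGreatest hfS, frobNS_eq_of_isGreatest hf]
  · rw [setOf_frobNS_lt_two_mul_eq hfS]
    rintro x ⟨hxT, hfx, h2⟩
    have hxf : x ≠ f := fun h => hfx (by simpa [h] using hT.1)
    exact ⟨Or.inr ⟨hxT, hfx, h2⟩, h2, lt_of_le_of_ne (hf.2 hxT) hxf⟩
  · rw [lNS_eq hf, hm, Set.ncard_singleton]
  · exact (Set.union_sdiff_cancel_right fun x hx => hx.2.1 hx.1).symm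

end

/-- (1) If S is pseudo-symmetric and A ⊆ {x ∈ S : F(S)/2 < x < F(S)} has
cardinality n with S∖A a numerical semigroup, then l(S∖A) = 2n + 1. (2) Every numerical
semigroup T with l(T) = 2n + 1 arises this way (with F(S) = F(T)). -/
theorem stmt14 (n : ℕ) :
    (∀ S A : Set ℕ, IsPseudoSymmetricNS S →
      A ⊆ {x ∈ S | frobNS S < 2 * (x : ℤ) ∧ (x : ℤ) < frobNS S} →
      A.ncard = n → IsNumericalSemigroup (S \ A) →
      lNS (S \ A) = 2 * n + 1) ∧
    (∀ T : Set ℕ, IsNumericalSemigroup T → lNS T = 2 * n + 1 →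
      ∃ S A : Set ℕ, IsPseudoSymmetricNS S ∧ frobNS S = frobNS T ∧
        A ⊆ {x ∈ S | frobNS S < 2 * (x : ℤ) ∧ (x : ℤ) < frobNS S} ∧
        A.ncard = n ∧ T = S \ A) := by
  refine ⟨fun S A hS hA hn _ => hn ▸ hS.lNS_sdiff hA, fun T hT hl => ?_⟩
  obtain ⟨S, A, hS, hfrob, hA, hlA, rfl⟩ := exists_isPseudoSymmetricNS_sdiff_of_odd hT ⟨n, hl⟩
  exact ⟨S, A, hS, hfrob, hA, by omega, rfl⟩
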